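/- arXiv:0804.0202 — 3 statements merged into one kernel-verified Lean document; each statement's English description precedes it below -/
import Mathlib

section
/- For partitions $\lambda, \mu$ each with exactly $N$ parts (parts allowed to be zero), the determinant $D^N_{\lambda,\mu} = \det\left( \binom{\lambda_i + N - i}{\mu_j + N - j} \right)_{1 \le i,j \le N}$ is a nonnegative integer, where the binomial coefficient is taken to be $0$ when $\lambda_i + N - i < \mu_j + N - j$. -/
/-!
Ordered minors of Pascal's matrix `(r.choose j)` are nonnegative, and `D^N_{λ,μ}` is such a minor,
taken at the strictly decreasing row indices `λ_i + N - i` and column indices `μ_j + N - j`.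
On rows `≤ k`, Pascal's matrix agrees with the product `E_{k-1} ⋯ E_0`, whose entries are
`C(min r k, r - j)`, where `E_i` adds row `r - 1` to row `r` for every `r > i`. Starting from the
identity, each `E_i` preserves the nonnegativity of all ordered minors: expanding the determinant
row by row, every term is a nonnegative multiple of a minor of the previous matrix at row indices
in `{f i - 1, f i}`, and these form a monotone sequence, so the minor is either ordered or has two
equal rows.
-/

namespace Matrix

section Pascal

variable {R : Type*} [Semiring R]

def truncPascal (k : ℕ) : Matrix ℕ ℕ R :=
  of fun r j => if j ≤ r then ((min r k).choose (r - j) : R) else 0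

theorem truncPascal_zero : (truncPascal 0 : Matrix ℕ ℕ R) = 1 := by
  ext r j
  rcases lt_trichotomy r j with h | rfl | h
  · simp [truncPascal, h.not_ge, one_apply_ne h.ne]
  · simp [truncPascal]
  · simp [truncPascal, h.le, one_apply_ne h.ne', Nat.choose_eq_zero_of_lt (Nat.sub_pos_of_lt h)]

theorem truncPascal_succ (k : ℕ) :
    (truncPascal (k + 1) : Matrix ℕ ℕ R) =
      of fun r j => truncPascal k r j + (if k < r then 1 else 0) * truncPascal k (r - 1) j := by
  ext r j
  by_cases hkr : k < r
  · rcases lt_trichotomy r j with h | rfl | h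
    · simp [truncPascal, h.not_ge, show ¬ j ≤ r - 1 by omega]
    · simp [truncPascal, hkr, show ¬ r ≤ r - 1 by omega]
    · simp only [truncPascal, of_apply, if_pos h.le, if_pos hkr, if_pos (by omega : j ≤ r - 1),
        one_mul, show min r (k + 1) = k + 1 by omega, show min r k = k by omega,
        show min (r - 1) k = k by omega, show r - j = r - 1 - j + 1 by omega]
      rw [Nat.choose_succ_succ', Nat.cast_add, add_comm]
  · simp [truncPascal, hkr, show min r (k + 1) = min r k by omega]

theorem truncPascal_of_le {k r : ℕ} (j : ℕ) (h : r ≤ k) :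
    (truncPascal k : Matrix ℕ ℕ R) r j = r.choose j := by
  by_cases hj : j ≤ r
  · simp [truncPascal, hj, h, Nat.choose_symm hj]
  · simp [truncPascal, hj, Nat.choose_eq_zero_of_lt (not_le.1 hj)]

end Pascal

variable {R : Type*} [CommRing R] [PartialOrder R]

def TotallyNonneg (A : Matrix ℕ ℕ R) : Prop :=
  ∀ ⦃n : ℕ⦄ ⦃f g : Fin n → ℕ⦄, StrictMono f → StrictMono g →
    0 ≤ (A.submatrix f g).det

theorem totallyNonneg_one [IsOrderedRing R] : TotallyNonneg (1 : Matrix ℕ ℕ R) := by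
  intro n f g hf hg
  by_cases hfg : Set.range f = Set.range g
  · rw [(hf.range_inj hg).1 hfg, submatrix_one _ hg.injective, det_one]
    exact zero_le_one
  · obtain ⟨x, hx⟩ := not_forall.1 (mt Set.ext hfg)
    by_cases hxf : x ∈ Set.range f
    · obtain ⟨i, rfl⟩ := hxf
      have hxg : f i ∉ Set.range g := fun h => hx (iff_of_true ⟨i, rfl⟩ h)
      exact (det_eq_zero_of_row_eq_zero (A := submatrix 1 f g) i fun j =>
        (one_apply_ne fun h => hxg ⟨j, h.symm⟩ : (1 : Matrix ℕ ℕ R) (f i) (g j) = 0)).ge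
    · obtain ⟨j, rfl⟩ : x ∈ Set.range g := by tauto
      exact (det_eq_zero_of_column_eq_zero (A := submatrix 1 f g) j fun i =>
        (one_apply_ne fun h => hxf ⟨i, h⟩ : (1 : Matrix ℕ ℕ R) (f i) (g j) = 0)).ge

namespace TotallyNonneg

variable {A : Matrix ℕ ℕ R}

theorem det_submatrix_nonneg_of_monotone (hA : TotallyNonneg A) {n : ℕ} {e g : Fin n → ℕ}
    (he : Monotone e) (hg : StrictMono g) : 0 ≤ (A.submatrix e g).det := by
  by_cases hinj : Function.Injective e
  · exact hA (he.strictMono_of_injective hinj) hg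
  · obtain ⟨i, i', hii', hne⟩ : ∃ i i', e i = e i' ∧ i ≠ i' := by
      simpa [Function.Injective] using hinj
    rw [det_zero_of_row_eq hne (by ext j; simp [hii'])]

theorem det_submatrix_nonneg_of_strictAnti (hA : TotallyNonneg A) {n : ℕ} {f g : Fin n → ℕ}
    (hf : StrictAnti f) (hg : StrictAnti g) : 0 ≤ (A.submatrix f g).det := by
  rw [← det_submatrix_equiv_self Fin.revPerm, submatrix_submatrix]
  exact hA (hf.comp Fin.rev_strictAnti) (hg.comp Fin.rev_strictAnti)

theorem add_mul_pred_row [IsOrderedRing R] (hA : TotallyNonneg A) {c : ℕ → R}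
    (hc : ∀ r, 0 ≤ c r) :
    TotallyNonneg (of fun r j => A r j + c r * A (r - 1) j) := by
  intro n f g hf hg
  let row : Fin n → Fin 2 → Fin n → R := fun i t j => c (f i) ^ (t : ℕ) * A (f i - t) (g j)
  have hsplit :
      (of fun r j => A r j + c r * A (r - 1) j).submatrix f g = fun i => ∑ t, row i t := by
    ext i j
    simp [row, Fin.sum_univ_two]
  rw [hsplit]
  change 0 ≤ detRowAlternating _
  rw [← AlternatingMap.coe_multilinearMap, MultilinearMap.map_sum]
  refine Finset.sum_nonneg fun t _ => ?_
  have hrows : (fun i => row i (t i)) =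
      of fun i j => c (f i) ^ (t i : ℕ) * A.submatrix (fun i => f i - t i) g i j := rfl
  rw [AlternatingMap.coe_multilinearMap, hrows]
  change 0 ≤ det _
  rw [det_mul_column]
  refine mul_nonneg (Finset.prod_nonneg fun i _ => pow_nonneg (hc _) _) ?_
  refine hA.det_submatrix_nonneg_of_monotone (e := fun i => f i - t i) (fun i i' hii' => ?_) hg
  rcases hii'.lt_or_eq with h | rfl
  · have := hf h
    have := (t i).isLt
    dsimp only
    omega
  · rfl

end TotallyNonneg

theorem totallyNonneg_truncPascal [IsOrderedRing R] (k : ℕ) :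
    TotallyNonneg (truncPascal k : Matrix ℕ ℕ R) := by
  induction k with
  | zero => exact truncPascal_zero (R := R) ▸ totallyNonneg_one
  | succ k ih =>
    rw [truncPascal_succ]
    exact ih.add_mul_pred_row fun r => by split_ifs <;> norm_num

theorem totallyNonneg_choose [IsOrderedRing R] :
    TotallyNonneg (of fun r j => (r.choose j : R)) := by
  intro n f g hf hg
  have hrows : (of fun r j => (r.choose j : R)).submatrix f g =
      (truncPascal (∑ i, f i)).submatrix f g := by
    ext i j
    exact (truncPascal_of_le _ (Finset.single_le_sum (fun _ _ => Nat.zero_le _)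
      (Finset.mem_univ i))).symm
  rw [hrows]
  exact totallyNonneg_truncPascal _ hf hg

end Matrix

/-- For partitions `l, m` with exactly `N` parts (parts may be zero), the determinant
`D^N_{l,m} = det (choose (l i + N - i) (m j + N - j))` is nonnegative.
Here rows/columns are indexed by `i : Fin N`, with `l i + N - i` rendered as
`l i + (N - 1 - i)` in 0-indexed form, and `Nat.choose a b = 0` when `a < b`. -/
theorem D_lambda_mu_nonneg
    (N : ℕ) (l m : Fin N → ℕ)
    (hl : ∀ i j : Fin N, i ≤ j → l j ≤ l i)
    (hm : ∀ i j : Fin N, i ≤ j → m j ≤ m i) :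
    0 ≤ (Matrix.det (fun i j : Fin N =>
      (Nat.choose (l i + (N - 1 - i.val)) (m j + (N - 1 - j.val)) : ℤ))) := by
  have hshift : StrictAnti fun i : Fin N => N - 1 - i.val := fun i j hij => by
    have : i.val < j.val := hij
    have := j.isLt
    show N - 1 - j.val < N - 1 - i.val
    omega
  exact Matrix.totallyNonneg_choose.det_submatrix_nonneg_of_strictAnti
    (Antitone.add_strictAnti hl hshift) (Antitone.add_strictAnti hm hshift)
end

section
/- For partitions $\lambda, \mu$ with exactly $N$ parts, if $\mu \not\subseteq \lambda$ (i.e., $\mu_i > \lambda_i$ for some $i$), then $D^N_{\lambda,\mu} = \det\left( \binom{\lambda_i + N - i}{\mu_j + N - j} \right)_{1 \le i,j \le N} = 0$. -/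
/-!
Every permutation `σ` of `Fin N` sends some `j ≤ k` to some `σ j ≥ k`, since `Iic k` has one
element more than `Iio k`. Hence any matrix vanishing on the block `k ≤ i`, `j ≤ k` has zero
determinant. When `l k < m k`, the binomial matrix vanishes there: the shifted sequences
`l i + (N - 1 - i)` and `m j + (N - 1 - j)` are antitone, so each binomial coefficient in the
block has upper index smaller than its lower index.
-/

theorem Equiv.Perm.exists_le_and_le_apply {n : ℕ} (σ : Equiv.Perm (Fin n)) (k : Fin n) :
    ∃ j ≤ k, k ≤ σ j := by
  by_contra! h
  have hmaps : Set.MapsTo σ (Finset.Iic k) (Finset.Iio k) := fun j hj => by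
    simpa using h j (Finset.mem_Iic.mp hj)
  have hcard := Finset.card_le_card_of_injOn σ hmaps σ.injective.injOn
  rw [Fin.card_Iic, Fin.card_Iio] at hcard
  omega

theorem Matrix.det_eq_zero_of_apply_eq_zero_of_le {R : Type*} [CommRing R] {n : ℕ}
    (A : Matrix (Fin n) (Fin n) R) (k : Fin n) (hA : ∀ i j, k ≤ i → j ≤ k → A i j = 0) :
    A.det = 0 := by
  rw [Matrix.det_apply]
  refine Finset.sum_eq_zero fun σ _ => ?_
  obtain ⟨j, hjk, hkσj⟩ := σ.exists_le_and_le_apply k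
  have hprod : ∏ i, A (σ i) i = 0 := Finset.prod_eq_zero (Finset.mem_univ j) (hA _ _ hkσj hjk)
  rw [hprod, smul_zero]

theorem Antitone.add_rev_index {n : ℕ} {a : Fin n → ℕ} (ha : Antitone a) :
    Antitone fun i : Fin n => a i + (n - 1 - i.val) := by
  intro i j hij
  show a j + (n - 1 - j.val) ≤ a i + (n - 1 - i.val)
  have hj : j.val < n := j.isLt
  have hij' : i.val ≤ j.val := hij
  have := ha hij
  omega

/-- If `m ⊄ l` (i.e. `l i < m i` for some `i`), then the determinant
`D^N_{l,m} = det (choose (l i + N - i) (m j + N - j))` vanishes. -/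
theorem D_lambda_mu_eq_zero_of_not_subset
    (N : ℕ) (l m : Fin N → ℕ)
    (hl : ∀ i j : Fin N, i ≤ j → l j ≤ l i)
    (hm : ∀ i j : Fin N, i ≤ j → m j ≤ m i)
    (hns : ∃ i : Fin N, l i < m i) :
    (Matrix.det (fun i j : Fin N =>
      (Nat.choose (l i + (N - 1 - i.val)) (m j + (N - 1 - j.val)) : ℤ))) = 0 := by
  obtain ⟨k, hk⟩ := hns
  have hl' := Antitone.add_rev_index hl
  have hm' := Antitone.add_rev_index hm
  refine Matrix.det_eq_zero_of_apply_eq_zero_of_le _ k fun i j hki hjk => ?_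
  have hlt : l i + (N - 1 - i.val) < m j + (N - 1 - j.val) :=
    calc l i + (N - 1 - i.val) ≤ l k + (N - 1 - k.val) := hl' hki
      _ < m k + (N - 1 - k.val) := Nat.add_lt_add_right hk _
      _ ≤ m j + (N - 1 - j.val) := hm' hjk
  exact_mod_cast Nat.choose_eq_zero_of_lt hlt
end

section
/- Let $\alpha$ be a partition with $k$ parts contained in a $k \times (n-k)$ rectangle, and suppose $\alpha = (b+p, p, p, \ldots, p)$ with $a$ parts equal to $p$, where $a, b, p > 0$. Then the largest partition $\beta \le \alpha$ with $\beta \ne \alpha$ and such that $\beta$ is a rectangle strictly below the interior depression of $\alpha$ is $\beta = ((p-1)^{a+1})$, i.e., the rectangle with $a+1$ rows of length $p-1$. -/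
/-- For `α = (b+p, p^a)` with `a, b, p > 0`, the partition `β = ((p-1)^{a+1})` is
contained in `α`, differs from `α`, and is the largest rectangle with part length
`≤ p - 1` (strictly below the interior depression of `α`) contained in `α`:
any rectangle with `r` rows of length `q ≤ p - 1` contained in `α` is contained in `β`. -/
theorem singular_locus_rectangle
    (a b p : ℕ) (ha : 0 < a) (hb : 0 < b) (hp : 0 < p) :
    let α : ℕ → ℕ := fun j => if j = 0 then b + p else if j ≤ a then p else 0
    let β : ℕ → ℕ := fun j => if j ≤ a then p - 1 else 0
    (∀ j, β j ≤ α j) ∧ β ≠ α ∧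
    (∀ q r : ℕ, q ≤ p - 1 →
      (∀ j, (if j < r then q else 0) ≤ α j) →
      (∀ j, (if j < r then q else 0) ≤ β j)) := by
  intro α β
  refine ⟨?_, ?_, ?_⟩
  · intro j
    simp only [α, β]
    split_ifs with h1 h2 <;> omega
  · intro h
    have := congrFun h 0
    simp only [α, β, if_pos rfl, if_pos (Nat.zero_le a)] at this
    omega
  · intro q r hq hcon j
    by_cases hjr : j < r
    · by_cases hja : j ≤ a
      · simp only [β, if_pos hjr, if_pos hja]
        omega
      · -- j > a, j < r, so a+1 < r, and α (a+1) = 0, giving q = 0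
        have h2 := hcon (a + 1)
        have ha1 : a + 1 < r := by omega
        simp only [α, if_pos ha1] at h2
        rw [if_neg (by omega), if_neg (by omega)] at h2
        simp only [β, if_pos hjr, if_neg hja]
        omega
    · simp [β, hjr]
end
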